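/- If T is an everywhere Kurepa tree and U is a downward closed Kurepa subtree of T, then U contains a downward closed everywhere Kurepa subtree of T. -/

import Mathlib

noncomputable section
open Cardinal Set

def omega1 : Ordinal := (Cardinal.aleph 1).ord

structure O1TreeStr (T : Type) [PartialOrder T] where
  ht : T → Ordinal
  ht_lt : ∀ t : T, ht t < omega1
  ht_mono : ∀ s t : T, s < t → ht s < ht t
  levels_countable : ∀ α : Ordinal, {t : T | ht t = α}.Countable
  pred_exists : ∀ (t : T) (β : Ordinal), β ≤ ht t → ∃ s : T, s ≤ t ∧ ht s = β
  pred_linear : ∀ s s' t : T, s ≤ t → s' ≤ t → s ≤ s' ∨ s' ≤ s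
  extend : ∀ (t : T) (β : Ordinal), ht t ≤ β → β < omega1 → ∃ s : T, t ≤ s ∧ ht s = β
  no_limit_branching : ∀ s t : T, ht s = ht t → Order.IsSuccLimit (ht s) →
    (∀ u : T, u < s ↔ u < t) → s = t

variable {T : Type} [PartialOrder T]

def IsBranchIn (τ : O1TreeStr T) (A : Set T) (b : Set T) : Prop :=
  b ⊆ A ∧ IsChain (· ≤ ·) b ∧ ∀ α < omega1, ∃ t ∈ b, τ.ht t = α

def IsBranch (τ : O1TreeStr T) (b : Set T) : Prop := IsBranchIn τ Set.univ b

def IsKurepaSet (τ : O1TreeStr T) (A : Set T) : Prop :=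
  Cardinal.aleph 2 ≤ Cardinal.mk {b : Set T // IsBranchIn τ A b}

def EverywhereKurepa (τ : O1TreeStr T) : Prop :=
  ∀ x : T, IsKurepaSet τ {y | y ≤ x ∨ x ≤ y}

def DownwardClosed (τ : O1TreeStr T) (U : Set T) : Prop :=
  ∀ s t : T, t ∈ U → s ≤ t → s ∈ U

/-! Let `V` be the set of nodes lying on `ℵ₂` branches of `U`. It is contained in `U` and
downward closed because branches are. Every branch of `U` leaving `V` passes through a node carrying
at most `ℵ₁` branches, and there are at most `ℵ₁` nodes, so at most `ℵ₁` branches of `U` leave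
`V`. Hence for `x ∈ V`, `ℵ₂` of the branches of `U` through `x` stay inside `V`, and these are
branches of `V` through `x`; the same count applied to all branches of `U` shows `V ≠ ∅`. -/

lemma aleph_two_le_iff_aleph_one_lt {c : Cardinal} : ℵ_ 2 ≤ c ↔ ℵ_ 1 < c := by
  rw [show (2 : Ordinal) = 1 + 1 by norm_num, ← succ_aleph, Order.succ_le_iff]

lemma lt_mk_inter_of_mk_diff_le {α : Type*} {s t : Set α} {κ : Cardinal} (hκ : ℵ₀ ≤ κ)
    (hs : κ < #s) (hst : #↥(s \ t) ≤ κ) : κ < #↥(s ∩ t) := by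
  by_contra! hle
  refine hs.not_ge ?_
  calc #s = #↥(s ∩ t ∪ s \ t) := by rw [Set.inter_union_sdiff]
    _ ≤ #↥(s ∩ t) + #↥(s \ t) := mk_union_le _ _
    _ ≤ κ + κ := add_le_add hle hst
    _ = κ := add_eq_self hκ

lemma omega1_pos : (0 : Ordinal) < omega1 :=
  ord_pos.mpr (aleph_pos 1)

namespace O1TreeStr

lemma mk_le_aleph_one (τ : O1TreeStr T) : #T ≤ ℵ_ 1 := by
  have hfib : ∀ α : Set.Iio omega1,
      lift.{1} #((fun t => (⟨τ.ht t, τ.ht_lt t⟩ : Set.Iio omega1)) ⁻¹' {α}) ≤ ℵ₀ := by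
    intro α
    refine lift_le_aleph0.mpr <| mk_le_aleph0_iff.mpr <|
      ((τ.levels_countable α).mono ?_).to_subtype
    rintro t rfl
    rfl
  have h := lift_mk_le_lift_mk_mul_of_lift_mk_preimage_le _ hfib
  rwa [mk_Iio_ordinal, omega1, card_ord, lift_lift, ← lift_aleph0.{1, 0}, ← lift_mul, lift_le,
    mul_aleph0_eq (aleph0_le_aleph 1)] at h

lemma eq_of_comparable_of_ht_eq (τ : O1TreeStr T) {s t : T} (h : s ≤ t ∨ t ≤ s)
    (hst : τ.ht s = τ.ht t) : s = t := by
  rcases h with h | h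
  · exact h.eq_of_not_lt fun hlt => (τ.ht_mono _ _ hlt).ne hst
  · exact (h.eq_of_not_lt fun hlt => (τ.ht_mono _ _ hlt).ne hst.symm).symm

end O1TreeStr

namespace IsBranchIn

variable {τ : O1TreeStr T} {A b : Set T}

lemma nonempty (hb : IsBranchIn τ A b) : b.Nonempty :=
  let ⟨t, ht, _⟩ := hb.2.2 0 omega1_pos
  ⟨t, ht⟩

lemma mem_of_le_of_mem (hb : IsBranchIn τ A b) {s t : T} (hst : s ≤ t) (ht : t ∈ b) :
    s ∈ b := by
  obtain ⟨u, hu, hus⟩ := hb.2.2 (τ.ht s) (τ.ht_lt s)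
  have hcomp : u ≤ s ∨ s ≤ u := by
    rcases hb.2.1.total hu ht with hut | htu
    · exact τ.pred_linear u s t hut hst
    · exact Or.inr (hst.trans htu)
  rwa [← τ.eq_of_comparable_of_ht_eq hcomp hus]

lemma subset_comparable (hb : IsBranchIn τ A b) {t : T} (ht : t ∈ b) :
    b ⊆ {y | y ≤ t ∨ t ≤ y} :=
  fun _ hu => hb.2.1.total hu ht

lemma of_subset (hb : IsBranchIn τ A b) {B : Set T} (hB : b ⊆ B) : IsBranchIn τ B b :=
  ⟨hB, hb.2⟩

end IsBranchIn

lemma mk_branchesIn_not_subset_le (τ : O1TreeStr T) (A V : Set T)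
    (hV : ∀ t ∉ V, #↥{b : Set T | IsBranchIn τ A b ∧ t ∈ b} ≤ ℵ_ 1) :
    #↥{b : Set T | IsBranchIn τ A b ∧ ¬ b ⊆ V} ≤ ℵ_ 1 := by
  have hcover : {b : Set T | IsBranchIn τ A b ∧ ¬ b ⊆ V} ⊆
      ⋃ t : ↥Vᶜ, {b : Set T | IsBranchIn τ A b ∧ t.1 ∈ b} := by
    rintro b ⟨hb, hbV⟩
    obtain ⟨t, htb, htV⟩ := Set.not_subset.mp hbV
    exact Set.mem_iUnion.mpr ⟨⟨t, htV⟩, hb, htb⟩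
  calc #↥{b : Set T | IsBranchIn τ A b ∧ ¬ b ⊆ V}
      ≤ #↥Vᶜ * ⨆ t : ↥Vᶜ, #↥{b : Set T | IsBranchIn τ A b ∧ t.1 ∈ b} :=
        (mk_le_mk_of_subset hcover).trans (mk_iUnion_le _)
    _ ≤ ℵ_ 1 * ℵ_ 1 :=
        mul_le_mul' ((mk_set_le _).trans τ.mk_le_aleph_one) (ciSup_le' fun t => hV t.1 t.2)
    _ = ℵ_ 1 := mul_eq_self (aleph0_le_aleph 1)

def kurepaPoints (τ : O1TreeStr T) (U : Set T) : Set T :=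
  {t | ℵ_ 2 ≤ #{b : Set T // IsBranchIn τ U b ∧ t ∈ b}}

section kurepaPoints

variable (τ : O1TreeStr T) (U : Set T)

lemma kurepaPoints_subset : kurepaPoints τ U ⊆ U := by
  intro t ht
  obtain ⟨⟨b, hb, htb⟩⟩ := mk_ne_zero_iff.mp ((aleph_pos 2).trans_le ht).ne'
  exact hb.1 htb

lemma downwardClosed_kurepaPoints : DownwardClosed τ (kurepaPoints τ U) :=
  fun _ _ ht hst =>
    ht.trans <| mk_subtype_mono fun _ hb => ⟨hb.1, hb.1.mem_of_le_of_mem hst hb.2⟩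

lemma mk_branchesIn_not_subset_kurepaPoints_le :
    #↥{b : Set T | IsBranchIn τ U b ∧ ¬ b ⊆ kurepaPoints τ U} ≤ ℵ_ 1 :=
  mk_branchesIn_not_subset_le τ U _ fun _ ht =>
    not_lt.mp (aleph_two_le_iff_aleph_one_lt.not.mp ht)

lemma aleph_two_le_mk_branchesIn_subset_kurepaPoints {B : Set (Set T)}
    (hB : B ⊆ {b | IsBranchIn τ U b}) (hBK : ℵ_ 2 ≤ #B) :
    ℵ_ 2 ≤ #↥(B ∩ {b | b ⊆ kurepaPoints τ U}) := by
  have hdiff : B \ {b | b ⊆ kurepaPoints τ U} ⊆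
      {b : Set T | IsBranchIn τ U b ∧ ¬ b ⊆ kurepaPoints τ U} :=
    fun _ hb => ⟨hB hb.1, hb.2⟩
  rw [aleph_two_le_iff_aleph_one_lt] at hBK ⊢
  exact lt_mk_inter_of_mk_diff_le (aleph0_le_aleph 1) hBK
    ((mk_le_mk_of_subset hdiff).trans (mk_branchesIn_not_subset_kurepaPoints_le τ U))

end kurepaPoints

theorem stmt0_general (τ : O1TreeStr T)
    (U : Set T) (hK : IsKurepaSet τ U) :
    ∃ V : Set T, V ⊆ U ∧ V.Nonempty ∧ DownwardClosed τ V ∧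
      ∀ x ∈ V, IsKurepaSet τ (V ∩ {y | y ≤ x ∨ x ≤ y}) := by
  refine ⟨kurepaPoints τ U, kurepaPoints_subset τ U, ?_, downwardClosed_kurepaPoints τ U, ?_⟩
  · obtain ⟨⟨b, hb, hbK⟩⟩ := mk_ne_zero_iff.mp ((aleph_pos 2).trans_le
      (aleph_two_le_mk_branchesIn_subset_kurepaPoints τ U subset_rfl hK)).ne'
    exact (IsBranchIn.nonempty hb).mono hbK
  · intro x hx
    refine (aleph_two_le_mk_branchesIn_subset_kurepaPoints τ U (fun _ hb => hb.1) hx).trans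
      (mk_le_mk_of_subset ?_)
    rintro b ⟨⟨hb, hxb⟩, hbK⟩
    exact hb.of_subset (Set.subset_inter hbK (hb.subset_comparable hxb))

/-- If T is an everywhere Kurepa tree and U is a downward closed Kurepa subtree of T,
then U contains a (nonempty) downward closed everywhere Kurepa subtree of T. -/
theorem stmt0 (τ : O1TreeStr T) (hT : EverywhereKurepa τ)
    (U : Set T) (hdc : DownwardClosed τ U) (hK : IsKurepaSet τ U) :
    ∃ V : Set T, V ⊆ U ∧ V.Nonempty ∧ DownwardClosed τ V ∧
      ∀ x ∈ V, IsKurepaSet τ (V ∩ {y | y ≤ x ∨ x ≤ y}) :=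
  stmt0_general τ U hK
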